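/- arXiv:2510.00437 — 8 statements merged into one kernel-verified Lean document; each statement's English description precedes it below -/
import Mathlib

section
/- Let M be a self-adjoint positive definite invertible bounded linear operator on a real Hilbert space H, D ⊆ H nonempty, and T : D → H such that R := (I − M⁻¹) + M⁻¹∘T is nonexpansive. For any x, y ∈ D one has ‖Rx − Ry‖² = ‖x−y‖²_{I−M⁻¹} + ‖Tx − Ty‖²_{M⁻¹} − ‖(I−T)x − (I−T)y‖²_{M⁻¹(I−M⁻¹)} (this identity holds even without nonexpansiveness of R). -/
open scoped InnerProductSpace

/-- Identity for `R := (I − M⁻¹) + M⁻¹∘T`, `M` self-adjoint positive definite invertible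
with inverse `Minv`, `T : D → H`, `R` nonexpansive on `D`: for `x, y ∈ D`,
`‖Rx − Ry‖² = ‖x−y‖²_{I−M⁻¹} + ‖Tx−Ty‖²_{M⁻¹} − ‖(I−T)x−(I−T)y‖²_{M⁻¹(I−M⁻¹)}`. -/
theorem stmt3 {H : Type*} [NormedAddCommGroup H] [InnerProductSpace ℝ H] [CompleteSpace H]
    (M Minv : H →L[ℝ] H)
    (hM_selfadj : ∀ u v : H, ⟪M u, v⟫_ℝ = ⟪u, M v⟫_ℝ)
    (hM_posdef : ∀ u : H, u ≠ 0 → 0 < ⟪u, M u⟫_ℝ)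
    (hMinv : ∀ u : H, Minv (M u) = u) (hMinv' : ∀ u : H, M (Minv u) = u)
    (D : Set H) (hD : D.Nonempty) (T : H → H)
    (hR_ne : ∀ x ∈ D, ∀ y ∈ D,
        ‖(x - Minv x + Minv (T x)) - (y - Minv y + Minv (T y))‖ ≤ ‖x - y‖) :
    ∀ x ∈ D, ∀ y ∈ D,
      ‖(x - Minv x + Minv (T x)) - (y - Minv y + Minv (T y))‖ ^ 2 =
        ⟪x - y, (x - y) - Minv (x - y)⟫_ℝ +
          ⟪T x - T y, Minv (T x - T y)⟫_ℝ -
            ⟪(x - T x) - (y - T y),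
              Minv (((x - T x) - (y - T y)) - Minv ((x - T x) - (y - T y)))⟫_ℝ := by
  intro x hx y hy
  have hsym : ∀ u v : H, ⟪u, Minv v⟫_ℝ = ⟪Minv u, v⟫_ℝ := by
    intro u v
    calc ⟪u, Minv v⟫_ℝ = ⟪M (Minv u), Minv v⟫_ℝ := by rw [hMinv']
    _ = ⟪Minv u, M (Minv v)⟫_ℝ := hM_selfadj _ _
    _ = ⟪Minv u, v⟫_ℝ := by rw [hMinv']
  set a := x - y with ha
  set b := T x - T y with hb
  have key : (x - Minv x + Minv (T x)) - (y - Minv y + Minv (T y)) = a - Minv (a - b) := by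
    simp only [map_sub, ha, hb]; abel
  have hc : (x - T x) - (y - T y) = a - b := by simp only [ha, hb]; abel
  rw [key, hc, ← real_inner_self_eq_norm_sq]
  simp only [map_sub, inner_sub_left, inner_sub_right]
  have h1 := hsym a a
  have h2 := hsym a b
  have h3 := hsym b a
  have h4 := hsym b b
  have h5 := real_inner_comm a (Minv b)
  have h6 := real_inner_comm b (Minv a)
  have h7 := real_inner_comm a (Minv a)
  have h8 := real_inner_comm b (Minv b)
  have h9 := hsym a (Minv a)
  have h10 := hsym a (Minv b)
  have h11 := hsym b (Minv a)
  have h12 := hsym b (Minv b)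
  have h13 := real_inner_comm (Minv a) (Minv b)
  linarith
end

section
/- Let A be maximally monotone on H, B maximally monotone on G, K : H → G a nonzero bounded linear operator with adjoint K*, and τ, σ, γ > 0 with γ = τσ. Define T : H×G → H×G by: given (v,u), set x = J_{τA}(v − τK*(σKv − u/τ)), w = J_{B/σ}(Kv + Kx − u/γ), and T(v,u) = (v,u) + P(x − v, w − Kx) where P = diag(θ I_H, ηγ I_G) with θ, η > 0. If (v*, u*) is a fixed point of T, then with y* := σKv* − u*/τ, one has −K*y* ∈ A(v*) and y* ∈ B(Kv*); consequently 0 ∈ A(v*) + K*B(Kv*). -/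
open scoped InnerProductSpace Pointwise
open ContinuousLinearMap

/-
A fixed point of `T` forces `x = v*` and `w = Kx = Kv*`, since `θ` and `ηγ` are nonzero.
Then the arguments of the two resolvents become `v* + τ • (-K*y*)` and `Kv* + σ⁻¹ • y*`,
and the graph property of a resolvent, `J (p + c⁻¹ • q) = p → q ∈ A p`, yields both inclusions.
-/

section

variable {𝕜 E : Type*} [Field 𝕜] [AddCommGroup E] [Module 𝕜 E]

theorem eq_of_add_smul_sub_eq_self {c : 𝕜} (hc : c ≠ 0) {a b d : E} (h : a + c • (b - d) = a) :
    b = d := by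
  rw [add_eq_left, smul_eq_zero, sub_eq_zero] at h
  exact h.resolve_left hc

theorem mem_of_resolvent_eq {A : E → Set E} {J : E → E} {c : 𝕜} (hc : c ≠ 0)
    (hJ : ∀ s, c • (s - J s) ∈ A (J s)) {p q : E} (h : J (p + c⁻¹ • q) = p) : q ∈ A p := by
  simpa only [h, add_sub_cancel_left, smul_inv_smul₀ hc] using hJ (p + c⁻¹ • q)

end

theorem stmt6_general {H G : Type*} [NormedAddCommGroup H] [InnerProductSpace ℝ H] [CompleteSpace H]
    [NormedAddCommGroup G] [InnerProductSpace ℝ G] [CompleteSpace G]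
    (A : H → Set H) (B : G → Set G)
    (K : H →L[ℝ] G)
    (τ σ γ θ η : ℝ) (hτ : 0 < τ) (hσ : 0 < σ) (hγ : γ = τ * σ)
    (hθ : 0 < θ) (hη : 0 < η)
    (JA : H → H) (JB : G → G)
    (hJA : ∀ s : H, τ⁻¹ • (s - JA s) ∈ A (JA s))
    (hJB : ∀ s : G, σ • (s - JB s) ∈ B (JB s))
    (vstar : H) (ustar : G)
    (x : H) (w : G)
    (hx : x = JA (vstar - τ • (adjoint K) (σ • K vstar - τ⁻¹ • ustar)))
    (hw : w = JB (K vstar + K x - γ⁻¹ • ustar))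
    -- `(v*, u*)` is a fixed point of `T`:
    (hfix1 : vstar + θ • (x - vstar) = vstar)
    (hfix2 : ustar + (η * γ) • (w - K x) = ustar) :
    -(adjoint K) (σ • K vstar - τ⁻¹ • ustar) ∈ A vstar ∧
      (σ • K vstar - τ⁻¹ • ustar) ∈ B (K vstar) ∧
        (0 : H) ∈ A vstar + (adjoint K) '' B (K vstar) := by
  have hxv : x = vstar := eq_of_add_smul_sub_eq_self hθ.ne' hfix1
  have hγ0 : γ ≠ 0 := by rw [hγ]; positivity
  have hwx : w = K x := eq_of_add_smul_sub_eq_self (mul_ne_zero hη.ne' hγ0) hfix2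
  set y := σ • K vstar - τ⁻¹ • ustar with hy
  have hA : -(adjoint K) y ∈ A vstar :=
    mem_of_resolvent_eq (inv_ne_zero hτ.ne') hJA
      (by rw [inv_inv, smul_neg, ← sub_eq_add_neg, ← hx, hxv])
  have hB_arg : K vstar + σ⁻¹ • y = K vstar + K x - γ⁻¹ • ustar := by
    rw [hxv, hy, hγ]
    match_scalars <;> field_simp
  have hB : y ∈ B (K vstar) :=
    mem_of_resolvent_eq hσ.ne' hJB (by rw [hB_arg, ← hw, hwx, hxv])
  exact ⟨hA, hB, -(adjoint K) y, hA, (adjoint K) y, ⟨y, hB, rfl⟩, neg_add_cancel _⟩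

/-- If `(v*, u*)` is a fixed point of the primal-dual operator
`T(v,u) = (v,u) + P(x − v, w − Kx)`, where `x = J_{τA}(v − τK*(σKv − u/τ))`,
`w = J_{B/σ}(Kv + Kx − u/γ)` and `P = diag(θI, ηγI)` with `θ, η > 0`, then with
`y* = σKv* − u*/τ` one has `−K*y* ∈ A(v*)`, `y* ∈ B(Kv*)`, and consequently
`0 ∈ A(v*) + K*B(Kv*)`.  The resolvents are encoded by their graph properties:
`J_{τA}` satisfies `τ⁻¹ • (s − JA s) ∈ A (JA s)` and `J_{B/σ}` satisfies
`σ • (s − JB s) ∈ B (JB s)`. -/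
theorem stmt6 {H G : Type*} [NormedAddCommGroup H] [InnerProductSpace ℝ H] [CompleteSpace H]
    [NormedAddCommGroup G] [InnerProductSpace ℝ G] [CompleteSpace G]
    (A : H → Set H) (B : G → Set G)
    (hA_mono : ∀ x y u v : H, u ∈ A x → v ∈ A y → 0 ≤ ⟪x - y, u - v⟫_ℝ)
    (hB_mono : ∀ x y u v : G, u ∈ B x → v ∈ B y → 0 ≤ ⟪x - y, u - v⟫_ℝ)
    (K : H →L[ℝ] G) (hK : K ≠ 0)
    (τ σ γ θ η : ℝ) (hτ : 0 < τ) (hσ : 0 < σ) (hγ : γ = τ * σ)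
    (hθ : 0 < θ) (hη : 0 < η)
    (JA : H → H) (JB : G → G)
    (hJA : ∀ s : H, τ⁻¹ • (s - JA s) ∈ A (JA s))
    (hJB : ∀ s : G, σ • (s - JB s) ∈ B (JB s))
    (vstar : H) (ustar : G)
    (x : H) (w : G)
    (hx : x = JA (vstar - τ • (adjoint K) (σ • K vstar - τ⁻¹ • ustar)))
    (hw : w = JB (K vstar + K x - γ⁻¹ • ustar))
    -- `(v*, u*)` is a fixed point of `T`:
    (hfix1 : vstar + θ • (x - vstar) = vstar)
    (hfix2 : ustar + (η * γ) • (w - K x) = ustar) :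
    -(adjoint K) (σ • K vstar - τ⁻¹ • ustar) ∈ A vstar ∧
      (σ • K vstar - τ⁻¹ • ustar) ∈ B (K vstar) ∧
        (0 : H) ∈ A vstar + (adjoint K) '' B (K vstar) :=
  stmt6_general A B K τ σ γ θ η hτ hσ hγ hθ hη JA JB hJA hJB vstar ustar x w hx hw hfix1 hfix2
end

section
/- With the operator T of the previous context (resolvent-based primal-dual fixed-point operator with block-diagonal P = diag(θ I, ηγ I), θ, η > 0): if x* ∈ H and y* ∈ G satisfy −K*y* ∈ A(x*) and y* ∈ B(Kx*), then (x*, γKx* − τy*) is a fixed point of T, and moreover 0 ∈ A(x*) + K*B(Kx*). -/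
open scoped InnerProductSpace Pointwise
open ContinuousLinearMap

/-!
With `u* = γKx* − τy*`, the argument of `J_{τA}` at `(x*, u*)` is `x* − τK*y*` and that of
`J_{B/σ}` is `Kx* + σ⁻¹y*`; the optimality conditions say that `x*` and `Kx*` satisfy the
resolvent inclusions there, so by single-valuedness of resolvents of monotone operators
`x = x*` and `w = Kx*`.
-/

section Resolvent

variable {E : Type*} [NormedAddCommGroup E] [InnerProductSpace ℝ E] {A : E → Set E}

lemma eq_of_smul_sub_mem_of_monotone
    (hA : ∀ x y u v : E, u ∈ A x → v ∈ A y → 0 ≤ ⟪x - y, u - v⟫_ℝ)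
    {c : ℝ} (hc : 0 < c) {s a b : E} (ha : c • (s - a) ∈ A a) (hb : c • (s - b) ∈ A b) :
    a = b := by
  have h := hA a b _ _ ha hb
  have hdiff : c • (s - a) - c • (s - b) = -(c • (a - b)) := by
    rw [← smul_sub, ← smul_neg, neg_sub, sub_sub_sub_cancel_left]
  rw [hdiff, inner_neg_right, real_inner_smul_right, real_inner_self_eq_norm_sq] at h
  have hsq : ‖a - b‖ ^ 2 ≤ 0 := nonpos_of_mul_nonpos_right (by linarith) hc
  rwa [sq_nonpos_iff, norm_eq_zero, sub_eq_zero] at hsq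

lemma resolvent_eq_of_smul_sub_mem
    (hA : ∀ x y u v : E, u ∈ A x → v ∈ A y → 0 ≤ ⟪x - y, u - v⟫_ℝ)
    {c : ℝ} (hc : 0 < c) {J : E → E} (hJ : ∀ s, c • (s - J s) ∈ A (J s)) {s p : E}
    (hp : c • (s - p) ∈ A p) : J s = p :=
  eq_of_smul_sub_mem_of_monotone hA hc (hJ s) hp

end Resolvent

theorem stmt7_general {H G : Type*} [NormedAddCommGroup H] [InnerProductSpace ℝ H] [CompleteSpace H]
    [NormedAddCommGroup G] [InnerProductSpace ℝ G] [CompleteSpace G]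
    (A : H → Set H) (B : G → Set G)
    (hA_mono : ∀ x y u v : H, u ∈ A x → v ∈ A y → 0 ≤ ⟪x - y, u - v⟫_ℝ)
    (hB_mono : ∀ x y u v : G, u ∈ B x → v ∈ B y → 0 ≤ ⟪x - y, u - v⟫_ℝ)
    (K : H →L[ℝ] G)
    (τ σ γ θ η : ℝ) (hτ : 0 < τ) (hσ : 0 < σ) (hγ : γ = τ * σ)
    (JA : H → H) (JB : G → G)
    (hJA : ∀ s : H, τ⁻¹ • (s - JA s) ∈ A (JA s))
    (hJB : ∀ s : G, σ • (s - JB s) ∈ B (JB s))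
    (xstar : H) (ystar : G)
    (hxy1 : -(adjoint K) ystar ∈ A xstar)
    (hxy2 : ystar ∈ B (K xstar))
    (ustar : G) (hustar : ustar = γ • K xstar - τ • ystar)
    (x : H) (w : G)
    (hx : x = JA (xstar - τ • (adjoint K) (σ • K xstar - τ⁻¹ • ustar)))
    (hw : w = JB (K xstar + K x - γ⁻¹ • ustar)) :
    -- `(x*, u*)` is a fixed point of `T`:
    (xstar + θ • (x - xstar) = xstar ∧ ustar + (η * γ) • (w - K x) = ustar) ∧
      (0 : H) ∈ A xstar + (adjoint K) '' B (K xstar) := by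
  have hτ0 : τ ≠ 0 := hτ.ne'
  have hγ0 : γ ≠ 0 := by rw [hγ]; positivity
  have hdual : σ • K xstar - τ⁻¹ • ustar = ystar := by
    rw [hustar, hγ, smul_sub, smul_smul, smul_smul, inv_mul_cancel_left₀ hτ0,
      inv_mul_cancel₀ hτ0, one_smul, sub_sub_cancel]
  have hprimal : x = xstar := by
    rw [hx, hdual]
    refine resolvent_eq_of_smul_sub_mem hA_mono (inv_pos.2 hτ) hJA ?_
    rwa [sub_sub_cancel_left, smul_neg, inv_smul_smul₀ hτ0]
  have hshift : K xstar - γ⁻¹ • ustar = σ⁻¹ • ystar := by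
    rw [hustar, smul_sub, inv_smul_smul₀ hγ0, smul_smul, sub_sub_cancel, hγ,
      mul_inv, mul_right_comm, inv_mul_cancel₀ hτ0, one_mul]
  have hKx : w = K xstar := by
    rw [hw, hprimal]
    refine resolvent_eq_of_smul_sub_mem hB_mono hσ hJB ?_
    rwa [add_sub_assoc, hshift, add_sub_cancel_left, smul_inv_smul₀ hσ.ne']
  refine ⟨⟨by simp [hprimal], by simp [hKx, hprimal]⟩, ?_⟩
  exact ⟨_, hxy1, _, ⟨ystar, hxy2, rfl⟩, neg_add_cancel _⟩

/-- Converse of the fixed-point characterization: if `x* ∈ H` and `y* ∈ G` satisfy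
`−K*y* ∈ A(x*)` and `y* ∈ B(Kx*)`, then `(x*, γKx* − τy*)` is a fixed point of the
primal-dual operator `T(v,u) = (v,u) + P(x − v, w − Kx)` with
`x = J_{τA}(v − τK*(σKv − u/τ))`, `w = J_{B/σ}(Kv + Kx − u/γ)`,
`P = diag(θI, ηγI)`, `θ, η > 0`; moreover `0 ∈ A(x*) + K*B(Kx*)`.
The resolvents are encoded by their graph properties. -/
theorem stmt7 {H G : Type*} [NormedAddCommGroup H] [InnerProductSpace ℝ H] [CompleteSpace H]
    [NormedAddCommGroup G] [InnerProductSpace ℝ G] [CompleteSpace G]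
    (A : H → Set H) (B : G → Set G)
    (hA_mono : ∀ x y u v : H, u ∈ A x → v ∈ A y → 0 ≤ ⟪x - y, u - v⟫_ℝ)
    (hB_mono : ∀ x y u v : G, u ∈ B x → v ∈ B y → 0 ≤ ⟪x - y, u - v⟫_ℝ)
    (K : H →L[ℝ] G)
    (τ σ γ θ η : ℝ) (hτ : 0 < τ) (hσ : 0 < σ) (hγ : γ = τ * σ)
    (hθ : 0 < θ) (hη : 0 < η)
    (JA : H → H) (JB : G → G)
    (hJA : ∀ s : H, τ⁻¹ • (s - JA s) ∈ A (JA s))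
    (hJB : ∀ s : G, σ • (s - JB s) ∈ B (JB s))
    (xstar : H) (ystar : G)
    (hxy1 : -(adjoint K) ystar ∈ A xstar)
    (hxy2 : ystar ∈ B (K xstar))
    (ustar : G) (hustar : ustar = γ • K xstar - τ • ystar)
    (x : H) (w : G)
    (hx : x = JA (xstar - τ • (adjoint K) (σ • K xstar - τ⁻¹ • ustar)))
    (hw : w = JB (K xstar + K x - γ⁻¹ • ustar)) :
    -- `(x*, u*)` is a fixed point of `T`:
    (xstar + θ • (x - xstar) = xstar ∧ ustar + (η * γ) • (w - K x) = ustar) ∧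
      (0 : H) ∈ A xstar + (adjoint K) '' B (K xstar) :=
  stmt7_general A B hA_mono hB_mono K τ σ γ θ η hτ hσ hγ JA JB hJA hJB xstar ystar hxy1 hxy2 ustar
    hustar x w hx hw
end

section
/- Let A and B be monotone operators (on H and G respectively) with single-valued resolvents, K : H → G bounded linear, τ, σ > 0, γ = τσ, and let P be a bounded self-adjoint positive definite invertible operator on H×G with 0 ≺ P ≺ Φ_K, where Φ_K is the block operator Φ_K(v,u) = (2v + γK*u, γKv + 2γu). Define T as: given z = (v,u), x = J_{τA}(v − τK*(σKv − u/τ)), w = J_{B/σ}(Kv + Kx − u/γ), T(z) = z + P(x − v, w − Kx). Then with M := P⁻¹ and Q := M*(Φ_K − P)M ≻ 0, for all z, z̄ ∈ H×G: ‖T(z) − T(z̄)‖_M² ≤ ‖z − z̄‖_M² − ‖(I−T)(z) − (I−T)(z̄)‖_Q². -/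
open scoped InnerProductSpace
open ContinuousLinearMap

/-! Write `δ(z) = (x − v, w − Kx)`, so that `T z = z + P δ(z)`. Expanding the `M`-norm with
`M = P⁻¹` reduces the inequality to `2⟪z − z̄, δ − δ̄⟫ + ⟪δ − δ̄, Φ_K (δ − δ̄)⟫ ≤ 0`, with
`δ = δ(z)` and `δ̄ = δ(z̄)`. This left-hand side is, identically, `−2` times the monotonicity
inequality of `A` at `x, x̄` plus `−2γ` times that of `B` at `w, w̄`, both read through the
resolvents. Positivity of `Q` follows from that of `Φ_K − P` because `‖z‖ ≤ ‖P‖ ‖M z‖`. -/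

theorem sub_smul_sub_smul_eq {E F : Type*} [AddCommGroup E] [Module ℝ E] [AddCommGroup F]
    [Module ℝ F] (L : F →ₗ[ℝ] E) {τ : ℝ} (hτ : τ ≠ 0) (σ : ℝ) (v : E) (w u : F) :
    v - τ • L (σ • w - τ⁻¹ • u) = v - (τ * σ) • L w + L u := by
  rw [map_sub, map_smul, map_smul, smul_sub, smul_smul, smul_smul, mul_inv_cancel₀ hτ, one_smul]
  abel

theorem exists_pos_mul_sq_norm_le_comp_of_rightInverse {E F : Type*}
    [SeminormedAddCommGroup E] [NormedSpace ℝ E] [SeminormedAddCommGroup F] [NormedSpace ℝ F]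
    (P : F →L[ℝ] E) (M : E → F) (hPM : ∀ z, P (M z) = z) (q : F → ℝ)
    (hq : ∃ c > (0:ℝ), ∀ y, c * ‖y‖ ^ 2 ≤ q y) :
    ∃ c > (0:ℝ), ∀ z, c * ‖z‖ ^ 2 ≤ q (M z) := by
  obtain ⟨c, hc, hcq⟩ := hq
  refine ⟨c / (‖P‖ ^ 2 + 1), by positivity, fun z => ?_⟩
  have hz : ‖z‖ ^ 2 ≤ (‖P‖ ^ 2 + 1) * ‖M z‖ ^ 2 := by
    have h := hPM z ▸ P.le_opNorm (M z)
    nlinarith [norm_nonneg z, sq_nonneg ‖M z‖]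
  calc c / (‖P‖ ^ 2 + 1) * ‖z‖ ^ 2 ≤ c * ‖M z‖ ^ 2 := by
        rw [div_mul_eq_mul_div, div_le_iff₀ (by positivity), mul_assoc, mul_comm (‖M z‖ ^ 2)]
        exact mul_le_mul_of_nonneg_left hz hc.le
    _ ≤ q (M z) := hcq (M z)

section InnerProductSpace

variable {E : Type*} [NormedAddCommGroup E] [InnerProductSpace ℝ E]

theorem inner_resolvent_sub_nonneg {A : E → Set E}
    (hA : ∀ x y u v : E, u ∈ A x → v ∈ A y → 0 ≤ ⟪x - y, u - v⟫_ℝ)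
    {J : E → E} {μ : ℝ} (hμ : 0 < μ) (hJ : ∀ s, μ • (s - J s) ∈ A (J s)) (s s' : E) :
    0 ≤ ⟪J s - J s', (s - s') - (J s - J s')⟫_ℝ := by
  have h := hA _ _ _ _ (hJ s) (hJ s')
  rw [← smul_sub, real_inner_smul_right, sub_sub_sub_comm] at h
  exact nonneg_of_mul_nonneg_right h hμ

theorem inner_add_apply_add_eq (P M : E →L[ℝ] E)
    (hP : ∀ z z', ⟪P z, z'⟫_ℝ = ⟪z, P z'⟫_ℝ) (hMP : ∀ z, M (P z) = z) (hPM : ∀ z, P (M z) = z)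
    (d δ : E) :
    ⟪d + P δ, M (d + P δ)⟫_ℝ = ⟪d, M d⟫_ℝ + 2 * ⟪d, δ⟫_ℝ + ⟪δ, P δ⟫_ℝ := by
  rw [map_add, hMP, inner_add_left, inner_add_right, inner_add_right, hP, hPM, hP,
    real_inner_comm δ d]
  ring

theorem inner_sub_inv_sub_le (P M : E →L[ℝ] E)
    (hP : ∀ z z', ⟪P z, z'⟫_ℝ = ⟪z, P z'⟫_ℝ) (hMP : ∀ z, M (P z) = z) (hPM : ∀ z, P (M z) = z)
    (Φ : E → E) (hΦ : ∀ z, Φ (-z) = -Φ z) (T e : E → E) (hT : ∀ z, T z = z + P (e z))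
    (z zbar : E)
    (hkey : 2 * ⟪z - zbar, e z - e zbar⟫_ℝ + ⟪e z - e zbar, Φ (e z - e zbar)⟫_ℝ ≤ 0) :
    ⟪T z - T zbar, M (T z - T zbar)⟫_ℝ ≤
      ⟪z - zbar, M (z - zbar)⟫_ℝ -
        ⟪M ((z - T z) - (zbar - T zbar)),
          Φ (M ((z - T z) - (zbar - T zbar))) - P (M ((z - T z) - (zbar - T zbar)))⟫_ℝ := by
  set δ := e z - e zbar with hδ
  rw [hT, hT, show z + P (e z) - (zbar + P (e zbar)) = z - zbar + P δ by
      rw [hδ, map_sub]; abel,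
    show z - (z + P (e z)) - (zbar - (zbar + P (e zbar))) = P (-δ) by
      rw [hδ, map_neg, map_sub]; abel,
    inner_add_apply_add_eq P M hP hMP hPM, hMP, inner_sub_right (-δ), hΦ, map_neg,
    inner_neg_neg, inner_neg_neg]
  linarith

end InnerProductSpace

section PrimalDual

variable {H G : Type*} [NormedAddCommGroup H] [InnerProductSpace ℝ H] [CompleteSpace H]
  [NormedAddCommGroup G] [InnerProductSpace ℝ G] [CompleteSpace G]

noncomputable def primalDualPhi (K : H →L[ℝ] G) (γ : ℝ) (z : WithLp 2 (H × G)) :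
    WithLp 2 (H × G) :=
  WithLp.toLp 2 ((2:ℝ) • z.fst + γ • adjoint K z.snd, γ • K z.fst + (2 * γ) • z.snd)

theorem primalDualPhi_neg (K : H →L[ℝ] G) (γ : ℝ) (z : WithLp 2 (H × G)) :
    primalDualPhi K γ (-z) = -primalDualPhi K γ z := by
  apply WithLp.ofLp_injective
  ext <;> simp only [primalDualPhi, WithLp.neg_fst, WithLp.neg_snd, smul_neg, map_neg,
    WithLp.ofLp_neg, Prod.neg_mk, neg_add_rev] <;> abel

theorem inner_primalDualPhi_self (K : H →L[ℝ] G) (γ : ℝ) (z : WithLp 2 (H × G)) :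
    ⟪z, primalDualPhi K γ z⟫_ℝ =
      2 * ⟪z.fst, z.fst⟫_ℝ + 2 * γ * ⟪K z.fst, z.snd⟫_ℝ + 2 * γ * ⟪z.snd, z.snd⟫_ℝ := by
  simp only [primalDualPhi, WithLp.prod_inner_apply, WithLp.ofLp_fst, WithLp.ofLp_snd,
    inner_add_right, real_inner_smul_right, adjoint_inner_right, real_inner_comm (K z.fst)]
  ring

theorem two_inner_add_inner_primalDualPhi_toLp_nonpos (K : H →L[ℝ] G) {γ : ℝ} (hγ : 0 < γ)
    (a b : H) (c d : G)
    (hA : 0 ≤ ⟪a, (b - γ • adjoint K (K b) + adjoint K c) - a⟫_ℝ)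
    (hB : 0 ≤ ⟪d, (K b + K a - γ⁻¹ • c) - d⟫_ℝ) :
    2 * ⟪WithLp.toLp 2 (b, c), WithLp.toLp 2 (a - b, d - K a)⟫_ℝ +
      ⟪WithLp.toLp 2 (a - b, d - K a), primalDualPhi K γ (WithLp.toLp 2 (a - b, d - K a))⟫_ℝ
      ≤ 0 := by
  have hid : 2 * ⟪WithLp.toLp 2 (b, c), WithLp.toLp 2 (a - b, d - K a)⟫_ℝ +
      ⟪WithLp.toLp 2 (a - b, d - K a), primalDualPhi K γ (WithLp.toLp 2 (a - b, d - K a))⟫_ℝ =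
      -2 * ⟪a, (b - γ • adjoint K (K b) + adjoint K c) - a⟫_ℝ -
        2 * γ * ⟪d, (K b + K a - γ⁻¹ • c) - d⟫_ℝ := by
    rw [inner_primalDualPhi_self]
    simp only [WithLp.prod_inner_apply, WithLp.toLp_fst, WithLp.toLp_snd, map_sub,
      inner_sub_left, inner_sub_right, inner_add_right, real_inner_smul_right,
      adjoint_inner_right]
    field_simp
    rw [real_inner_comm (K b) d, real_inner_comm (K b) (K a), real_inner_comm c (K a),
      real_inner_comm c d]
    ring
  rw [hid]
  nlinarith [mul_nonneg hγ.le hB]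

theorem two_inner_sub_add_inner_primalDualPhi_nonpos (K : H →L[ℝ] G) {γ : ℝ} (hγ : 0 < γ)
    {JA : H → H} {JB : G → G}
    (hJA : ∀ s s', 0 ≤ ⟪JA s - JA s', (s - s') - (JA s - JA s')⟫_ℝ)
    (hJB : ∀ s s', 0 ≤ ⟪JB s - JB s', (s - s') - (JB s - JB s')⟫_ℝ)
    (x : WithLp 2 (H × G) → H) (w : WithLp 2 (H × G) → G)
    (hx : ∀ z, x z = JA (z.fst - γ • adjoint K (K z.fst) + adjoint K z.snd))
    (hw : ∀ z, w z = JB (K z.fst + K (x z) - γ⁻¹ • z.snd))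
    (e : WithLp 2 (H × G) → WithLp 2 (H × G))
    (he : ∀ z, e z = WithLp.toLp 2 (x z - z.fst, w z - K (x z))) (z zbar : WithLp 2 (H × G)) :
    2 * ⟪z - zbar, e z - e zbar⟫_ℝ + ⟪e z - e zbar, primalDualPhi K γ (e z - e zbar)⟫_ℝ ≤ 0 := by
  have hA := hJA (z.fst - γ • adjoint K (K z.fst) + adjoint K z.snd)
    (zbar.fst - γ • adjoint K (K zbar.fst) + adjoint K zbar.snd)
  have hB := hJB (K z.fst + K (x z) - γ⁻¹ • z.snd) (K zbar.fst + K (x zbar) - γ⁻¹ • zbar.snd)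
  rw [← hx, ← hx] at hA
  rw [← hw, ← hw] at hB
  have hδ : e z - e zbar = WithLp.toLp 2 (x z - x zbar - (z.fst - zbar.fst),
      w z - w zbar - K (x z - x zbar)) := by
    apply WithLp.ofLp_injective
    ext <;> simp only [he, map_sub, WithLp.ofLp_sub, Prod.fst_sub, Prod.snd_sub] <;> abel
  rw [hδ, show z - zbar = WithLp.toLp 2 (z.fst - zbar.fst, z.snd - zbar.snd) from rfl]
  exact two_inner_add_inner_primalDualPhi_toLp_nonpos K hγ _ _ _ _
    (by convert hA using 3; simp only [map_sub, smul_sub]; abel)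
    (by convert hB using 3; simp only [map_sub, smul_sub]; abel)

end PrimalDual

theorem stmt8_general {H G : Type*} [NormedAddCommGroup H] [InnerProductSpace ℝ H] [CompleteSpace H]
    [NormedAddCommGroup G] [InnerProductSpace ℝ G] [CompleteSpace G]
    (A : H → Set H) (B : G → Set G)
    (hA_mono : ∀ x y u v : H, u ∈ A x → v ∈ A y → 0 ≤ ⟪x - y, u - v⟫_ℝ)
    (hB_mono : ∀ x y u v : G, u ∈ B x → v ∈ B y → 0 ≤ ⟪x - y, u - v⟫_ℝ)
    (K : H →L[ℝ] G)
    (τ σ γ : ℝ) (hτ : 0 < τ) (hσ : 0 < σ) (hγ : γ = τ * σ)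
    (JA : H → H) (JB : G → G)
    (hJA : ∀ s : H, τ⁻¹ • (s - JA s) ∈ A (JA s))
    (hJB : ∀ s : G, σ • (s - JB s) ∈ B (JB s))
    (P Minv : WithLp 2 (H × G) →L[ℝ] WithLp 2 (H × G))
    (hP_selfadj : ∀ z z' : WithLp 2 (H × G), ⟪P z, z'⟫_ℝ = ⟪z, P z'⟫_ℝ)
    (hMinv : ∀ z, Minv (P z) = z) (hMinv' : ∀ z, P (Minv z) = z)
    (Phi : WithLp 2 (H × G) → WithLp 2 (H × G))
    (hPhi : ∀ z : WithLp 2 (H × G), Phi z = (WithLp.equiv 2 (H × G)).symm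
        ((2:ℝ) • (WithLp.equiv 2 (H × G) z).1 + γ • (adjoint K) (WithLp.equiv 2 (H × G) z).2,
         γ • K (WithLp.equiv 2 (H × G) z).1 + (2 * γ) • (WithLp.equiv 2 (H × G) z).2))
    -- `P ≺ Φ_K`:
    (hPhiP_posdef : ∃ c > (0:ℝ), ∀ z : WithLp 2 (H × G), c * ‖z‖ ^ 2 ≤ ⟪z, Phi z - P z⟫_ℝ)
    (xf : WithLp 2 (H × G) → H) (wf : WithLp 2 (H × G) → G)
    (T : WithLp 2 (H × G) → WithLp 2 (H × G))
    (hxf : ∀ z : WithLp 2 (H × G), xf z = JA ((WithLp.equiv 2 (H × G) z).1 -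
        τ • (adjoint K) (σ • K (WithLp.equiv 2 (H × G) z).1 -
          τ⁻¹ • (WithLp.equiv 2 (H × G) z).2)))
    (hwf : ∀ z : WithLp 2 (H × G), wf z = JB (K (WithLp.equiv 2 (H × G) z).1 + K (xf z) -
        γ⁻¹ • (WithLp.equiv 2 (H × G) z).2))
    (hT : ∀ z : WithLp 2 (H × G), T z = z + P ((WithLp.equiv 2 (H × G)).symm
        (xf z - (WithLp.equiv 2 (H × G) z).1, wf z - K (xf z)))) :
    -- `Q := M*(Φ_K − P)M ≻ 0` and the extended firm nonexpansiveness inequality holds: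
    (∃ c > (0:ℝ), ∀ z : WithLp 2 (H × G),
        c * ‖z‖ ^ 2 ≤ ⟪Minv z, Phi (Minv z) - P (Minv z)⟫_ℝ) ∧
      ∀ z zbar : WithLp 2 (H × G),
        ⟪T z - T zbar, Minv (T z - T zbar)⟫_ℝ ≤
          ⟪z - zbar, Minv (z - zbar)⟫_ℝ -
            ⟪Minv ((z - T z) - (zbar - T zbar)),
              Phi (Minv ((z - T z) - (zbar - T zbar))) -
                P (Minv ((z - T z) - (zbar - T zbar)))⟫_ℝ := by
  have hγ0 : 0 < γ := hγ ▸ mul_pos hτ hσ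
  obtain rfl : Phi = primalDualPhi K γ := funext hPhi
  refine ⟨exists_pos_mul_sq_norm_le_comp_of_rightInverse P Minv hMinv' _ hPhiP_posdef,
    fun z zbar => ?_⟩
  have hx : ∀ z : WithLp 2 (H × G),
      xf z = JA (z.fst - γ • adjoint K (K z.fst) + adjoint K z.snd) := fun z => by
    rw [hxf, hγ]
    exact congrArg JA (sub_smul_sub_smul_eq (adjoint K).toLinearMap hτ.ne' σ _ _ _)
  have hkey := two_inner_sub_add_inner_primalDualPhi_nonpos K hγ0
    (inner_resolvent_sub_nonneg hA_mono (inv_pos.2 hτ) hJA)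
    (inner_resolvent_sub_nonneg hB_mono hσ hJB) xf wf hx hwf _ (fun _ => rfl) z zbar
  exact inner_sub_inv_sub_le P Minv hP_selfadj hMinv hMinv' _ (primalDualPhi_neg K γ) T _ hT
    z zbar hkey

/-- The primal-dual operator `T(z) = z + P(x − v, w − Kx)` (with
`x = J_{τA}(v − τK*(σKv − u/τ))`, `w = J_{B/σ}(Kv + Kx − u/γ)`, `z = (v,u)`) built from
monotone operators `A`, `B` and a self-adjoint positive definite invertible `P` with
`0 ≺ P ≺ Φ_K` satisfies, with `M = P⁻¹` and `Q = M*(Φ_K − P)M ≻ 0`,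
`‖T(z) − T(z̄)‖_M² ≤ ‖z − z̄‖_M² − ‖(I−T)z − (I−T)z̄‖_Q²` for all `z, z̄`.
Here the product Hilbert space is `WithLp 2 (H × G)` and
`⟪d, Q d⟫ = ⟪M d, (Φ_K − P)(M d)⟫` since `M` is self-adjoint. -/
theorem stmt8 {H G : Type*} [NormedAddCommGroup H] [InnerProductSpace ℝ H] [CompleteSpace H]
    [NormedAddCommGroup G] [InnerProductSpace ℝ G] [CompleteSpace G]
    (A : H → Set H) (B : G → Set G)
    (hA_mono : ∀ x y u v : H, u ∈ A x → v ∈ A y → 0 ≤ ⟪x - y, u - v⟫_ℝ)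
    (hB_mono : ∀ x y u v : G, u ∈ B x → v ∈ B y → 0 ≤ ⟪x - y, u - v⟫_ℝ)
    (K : H →L[ℝ] G)
    (τ σ γ : ℝ) (hτ : 0 < τ) (hσ : 0 < σ) (hγ : γ = τ * σ)
    (JA : H → H) (JB : G → G)
    (hJA : ∀ s : H, τ⁻¹ • (s - JA s) ∈ A (JA s))
    (hJB : ∀ s : G, σ • (s - JB s) ∈ B (JB s))
    (P Minv : WithLp 2 (H × G) →L[ℝ] WithLp 2 (H × G))
    (hP_selfadj : ∀ z z' : WithLp 2 (H × G), ⟪P z, z'⟫_ℝ = ⟪z, P z'⟫_ℝ)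
    (hP_posdef : ∃ c > (0:ℝ), ∀ z : WithLp 2 (H × G), c * ‖z‖ ^ 2 ≤ ⟪z, P z⟫_ℝ)
    (hMinv : ∀ z, Minv (P z) = z) (hMinv' : ∀ z, P (Minv z) = z)
    (Phi : WithLp 2 (H × G) → WithLp 2 (H × G))
    (hPhi : ∀ z : WithLp 2 (H × G), Phi z = (WithLp.equiv 2 (H × G)).symm
        ((2:ℝ) • (WithLp.equiv 2 (H × G) z).1 + γ • (adjoint K) (WithLp.equiv 2 (H × G) z).2,
         γ • K (WithLp.equiv 2 (H × G) z).1 + (2 * γ) • (WithLp.equiv 2 (H × G) z).2))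
    -- `P ≺ Φ_K`:
    (hPhiP_posdef : ∃ c > (0:ℝ), ∀ z : WithLp 2 (H × G), c * ‖z‖ ^ 2 ≤ ⟪z, Phi z - P z⟫_ℝ)
    (xf : WithLp 2 (H × G) → H) (wf : WithLp 2 (H × G) → G)
    (T : WithLp 2 (H × G) → WithLp 2 (H × G))
    (hxf : ∀ z : WithLp 2 (H × G), xf z = JA ((WithLp.equiv 2 (H × G) z).1 -
        τ • (adjoint K) (σ • K (WithLp.equiv 2 (H × G) z).1 -
          τ⁻¹ • (WithLp.equiv 2 (H × G) z).2)))
    (hwf : ∀ z : WithLp 2 (H × G), wf z = JB (K (WithLp.equiv 2 (H × G) z).1 + K (xf z) -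
        γ⁻¹ • (WithLp.equiv 2 (H × G) z).2))
    (hT : ∀ z : WithLp 2 (H × G), T z = z + P ((WithLp.equiv 2 (H × G)).symm
        (xf z - (WithLp.equiv 2 (H × G) z).1, wf z - K (xf z)))) :
    -- `Q := M*(Φ_K − P)M ≻ 0` and the extended firm nonexpansiveness inequality holds:
    (∃ c > (0:ℝ), ∀ z : WithLp 2 (H × G),
        c * ‖z‖ ^ 2 ≤ ⟪Minv z, Phi (Minv z) - P (Minv z)⟫_ℝ) ∧
      ∀ z zbar : WithLp 2 (H × G),
        ⟪T z - T zbar, Minv (T z - T zbar)⟫_ℝ ≤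
          ⟪z - zbar, Minv (z - zbar)⟫_ℝ -
            ⟪Minv ((z - T z) - (zbar - T zbar)),
              Phi (Minv ((z - T z) - (zbar - T zbar))) -
                P (Minv ((z - T z) - (zbar - T zbar)))⟫_ℝ :=
  stmt8_general A B hA_mono hB_mono K τ σ γ hτ hσ hγ JA JB hJA hJB P Minv hP_selfadj hMinv hMinv'
    Phi hPhi hPhiP_posdef xf wf T hxf hwf hT
end

section
/- Let T : H → H satisfy the firm nonexpansiveness inequality in the M-norm: ‖T(z) − T(z̄)‖_M² ≤ ‖z − z̄‖_M² − ‖(I−T)(z) − (I−T)(z̄)‖_M² for all z, z̄, where M ≻ 0 is bounded self-adjoint. Suppose Fix T ≠ ∅ and let z_{n+1} = T(z_n) from any z_0. Then for any z* ∈ Fix T and any N ≥ 1: ‖z_N − z_{N−1}‖_M² ≤ ‖z_0 − z*‖_M²/N, and moreover N·‖z_N − z_{N−1}‖_M² → 0 as N → ∞. -/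
open scoped InnerProductSpace
open Filter Finset

/-!
Firm nonexpansiveness against the fixed point `z*` gives the Fejér inequality
`‖z_{n+1} − z*‖_M² + ‖z_{n+1} − z_n‖_M² ≤ ‖z_n − z*‖_M²`, so the squared residuals
`‖z_{n+1} − z_n‖_M²` have partial sums bounded by `‖z_0 − z*‖_M²`; firm nonexpansiveness between
consecutive iterates makes them nonincreasing. A nonincreasing sequence is bounded by the mean of
its predecessors, which gives the `1/N` rate, and a nonincreasing summable sequence is `o(1/n)`.
-/

/-- Olivier's theorem. -/
theorem Antitone.tendsto_nat_mul_of_summable {d : ℕ → ℝ} (hd : Antitone d) (hs : Summable d) :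
    Tendsto (fun n : ℕ => (n : ℝ) * d n) atTop (nhds 0) := by
  have hnn : ∀ n, 0 ≤ d n := hd.le_of_tendsto hs.tendsto_atTop_zero
  have hS := hs.hasSum.tendsto_sum_nat
  have hblock : Tendsto (fun n : ℕ => ∑ k ∈ Ico (n / 2) n, d k) atTop (nhds 0) := by
    have := hS.sub (hS.comp (Nat.tendsto_div_const_atTop two_ne_zero))
    simpa [Function.comp_def, sum_Ico_eq_sub _ (Nat.div_le_self _ 2)] using this
  -- `n d n ≤ 2 ∑_{n/2 ≤ k < n} d k + d n` by monotonicity, and these blocks are Cauchy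
  -- differences of the partial sums
  refine squeeze_zero (fun n => mul_nonneg n.cast_nonneg (hnn n)) (fun n => ?_)
    (by simpa using (hblock.const_mul 2).add hs.tendsto_atTop_zero)
  have hcard : ((n - n / 2 : ℕ) : ℝ) * d n ≤ ∑ k ∈ Ico (n / 2) n, d k := by
    simpa using card_nsmul_le_sum (Ico (n / 2) n) d (d n) fun k hk => hd (mem_Ico.1 hk).2.le
  have hn : (n : ℝ) ≤ 2 * ((n - n / 2 : ℕ) : ℝ) + 1 := by
    exact_mod_cast (by omega : n ≤ 2 * (n - n / 2) + 1)
  nlinarith [hnn n]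

section FirmlyNonexpansive

variable {E : Type*} [NormedAddCommGroup E] [InnerProductSpace ℝ E]

/-- `‖u‖_M²`. -/
def mNormSq (M : E →L[ℝ] E) (u : E) : ℝ := ⟪u, M u⟫_ℝ

@[simp]
lemma mNormSq_neg (M : E →L[ℝ] E) (u : E) : mNormSq M (-u) = mNormSq M u := by
  simp [mNormSq]

def FirmlyNonexpansiveWrt (M : E →L[ℝ] E) (T : E → E) : Prop :=
  ∀ z zbar : E, mNormSq M (T z - T zbar) ≤
    mNormSq M (z - zbar) - mNormSq M ((z - T z) - (zbar - T zbar))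

variable {M : E →L[ℝ] E} {T : E → E} {z : ℕ → E}

lemma FirmlyNonexpansiveWrt.antitone_residual (hM : ∀ u, 0 ≤ mNormSq M u)
    (hT : FirmlyNonexpansiveWrt M T) (hz : ∀ n, z (n + 1) = T (z n)) :
    Antitone fun n => mNormSq M (z (n + 1) - z n) := by
  refine antitone_nat_of_succ_le fun n => ?_
  have h := hT (z (n + 1)) (z n)
  rw [← hz, ← hz] at h
  linarith [hM (z (n + 1) - z (n + 1 + 1) - (z n - z (n + 1)))]

lemma FirmlyNonexpansiveWrt.fejer {zstar : E} (hT : FirmlyNonexpansiveWrt M T)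
    (hzstar : T zstar = zstar) (hz : ∀ n, z (n + 1) = T (z n)) (n : ℕ) :
    mNormSq M (z (n + 1) - zstar) + mNormSq M (z (n + 1) - z n) ≤ mNormSq M (z n - zstar) := by
  have h := hT (z n) zstar
  rw [hzstar, ← hz, show z n - z (n + 1) - (zstar - zstar) = -(z (n + 1) - z n) by abel,
    mNormSq_neg] at h
  linarith

lemma FirmlyNonexpansiveWrt.sum_residual_le {zstar : E} (hM : ∀ u, 0 ≤ mNormSq M u)
    (hT : FirmlyNonexpansiveWrt M T) (hzstar : T zstar = zstar)
    (hz : ∀ n, z (n + 1) = T (z n)) (N : ℕ) :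
    ∑ k ∈ range N, mNormSq M (z (k + 1) - z k) ≤ mNormSq M (z 0 - zstar) := by
  suffices ∀ N, ∑ k ∈ range N, mNormSq M (z (k + 1) - z k) + mNormSq M (z N - zstar) ≤
      mNormSq M (z 0 - zstar) from (this N).trans' (le_add_of_nonneg_right (hM _))
  intro N
  induction N with
  | zero => simp
  | succ n ih =>
    rw [sum_range_succ]
    linarith [hT.fejer hzstar hz n]

lemma FirmlyNonexpansiveWrt.succ_mul_residual_le {zstar : E} (hM : ∀ u, 0 ≤ mNormSq M u)
    (hT : FirmlyNonexpansiveWrt M T) (hzstar : T zstar = zstar)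
    (hz : ∀ n, z (n + 1) = T (z n)) (n : ℕ) :
    ((n : ℝ) + 1) * mNormSq M (z (n + 1) - z n) ≤ mNormSq M (z 0 - zstar) := by
  refine le_trans ?_ (hT.sum_residual_le hM hzstar hz (n + 1))
  simpa using card_nsmul_le_sum (range (n + 1)) _ _ fun k hk =>
    hT.antitone_residual hM hz (mem_range_succ_iff.1 hk)

lemma FirmlyNonexpansiveWrt.tendsto_succ_mul_residual {zstar : E} (hM : ∀ u, 0 ≤ mNormSq M u)
    (hT : FirmlyNonexpansiveWrt M T) (hzstar : T zstar = zstar)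
    (hz : ∀ n, z (n + 1) = T (z n)) :
    Tendsto (fun n : ℕ => ((n : ℝ) + 1) * mNormSq M (z (n + 1) - z n)) atTop (nhds 0) := by
  have hs : Summable fun n => mNormSq M (z (n + 1) - z n) :=
    summable_of_sum_range_le (fun _ => hM _) (hT.sum_residual_le hM hzstar hz)
  simpa [add_mul] using
    ((hT.antitone_residual hM hz).tendsto_nat_mul_of_summable hs).add hs.tendsto_atTop_zero

end FirmlyNonexpansive

theorem stmt10_general {E : Type*} [NormedAddCommGroup E] [InnerProductSpace ℝ E]
    (M : E →L[ℝ] E)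
    (hM_posdef : ∀ u : E, u ≠ 0 → 0 < ⟪u, M u⟫_ℝ)
    (T : E → E)
    (hT : ∀ z zbar : E, ⟪T z - T zbar, M (T z - T zbar)⟫_ℝ ≤
        ⟪z - zbar, M (z - zbar)⟫_ℝ -
          ⟪(z - T z) - (zbar - T zbar), M ((z - T z) - (zbar - T zbar))⟫_ℝ)
    (zstar : E) (hzstar : T zstar = zstar)
    (z : ℕ → E) (hz : ∀ n, z (n + 1) = T (z n)) :
    (∀ N : ℕ, 1 ≤ N → ⟪z N - z (N - 1), M (z N - z (N - 1))⟫_ℝ ≤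
        ⟪z 0 - zstar, M (z 0 - zstar)⟫_ℝ / N) ∧
      Tendsto (fun N : ℕ => (N : ℝ) * ⟪z N - z (N - 1), M (z N - z (N - 1))⟫_ℝ)
        atTop (nhds 0) := by
  have hM : ∀ u, 0 ≤ mNormSq M u := fun u => by
    rcases eq_or_ne u 0 with rfl | hu
    · simp [mNormSq]
    · exact (hM_posdef u hu).le
  have hT : FirmlyNonexpansiveWrt M T := hT
  refine ⟨fun N hN => ?_, ?_⟩
  · obtain ⟨n, rfl⟩ := Nat.exists_eq_add_of_le' hN
    rw [Nat.add_sub_cancel, le_div_iff₀ (by positivity), mul_comm, Nat.cast_succ]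
    exact hT.succ_mul_residual_le hM hzstar hz n
  · rw [← tendsto_add_atTop_iff_nat 1]
    simpa [mNormSq] using hT.tendsto_succ_mul_residual hM hzstar hz

/-- For `T` firmly nonexpansive in the `M`-norm
(`‖Tz − Tz̄‖_M² ≤ ‖z − z̄‖_M² − ‖(I−T)z − (I−T)z̄‖_M²`, `M ≻ 0` self-adjoint) with fixed
point `z*`, the iterates `z_{n+1} = T(z_n)` satisfy
`‖z_N − z_{N−1}‖_M² ≤ ‖z_0 − z*‖_M²/N` for all `N ≥ 1`, and
`N·‖z_N − z_{N−1}‖_M² → 0` as `N → ∞`. -/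
theorem stmt10 {E : Type*} [NormedAddCommGroup E] [InnerProductSpace ℝ E] [CompleteSpace E]
    (M : E →L[ℝ] E)
    (hM_selfadj : ∀ u v : E, ⟪M u, v⟫_ℝ = ⟪u, M v⟫_ℝ)
    (hM_posdef : ∀ u : E, u ≠ 0 → 0 < ⟪u, M u⟫_ℝ)
    (T : E → E)
    (hT : ∀ z zbar : E, ⟪T z - T zbar, M (T z - T zbar)⟫_ℝ ≤
        ⟪z - zbar, M (z - zbar)⟫_ℝ -
          ⟪(z - T z) - (zbar - T zbar), M ((z - T z) - (zbar - T zbar))⟫_ℝ)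
    (zstar : E) (hzstar : T zstar = zstar)
    (z : ℕ → E) (hz : ∀ n, z (n + 1) = T (z n)) :
    (∀ N : ℕ, 1 ≤ N → ⟪z N - z (N - 1), M (z N - z (N - 1))⟫_ℝ ≤
        ⟪z 0 - zstar, M (z 0 - zstar)⟫_ℝ / N) ∧
      Tendsto (fun N : ℕ => (N : ℝ) * ⟪z N - z (N - 1), M (z N - z (N - 1))⟫_ℝ)
        atTop (nhds 0) :=
  stmt10_general M hM_posdef T hT zstar hzstar z hz
end

section
/- Let P be bounded self-adjoint with 0 ≺ P ≺ I on a real Hilbert space, and suppose T = (I − P) + PR for some nonexpansive R (i.e., T is P-averaged with P ≺ I). Then T is nonexpansive with respect to the P⁻¹-norm: ‖Tx − Ty‖_{P⁻¹} ≤ ‖x − y‖_{P⁻¹} for all x, y. -/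
open scoped InnerProductSpace

/-- If `P` is bounded self-adjoint with `0 ≺ P ≺ I` (inverse `Pinv`) and
`T = (I − P) + P∘R` for some nonexpansive `R` (i.e. `T` is `P`-averaged with `P ≺ I`),
then `T` is nonexpansive in the `P⁻¹`-norm:
`‖Tx − Ty‖_{P⁻¹} ≤ ‖x − y‖_{P⁻¹}` for all `x, y`. -/
theorem stmt12 {E : Type*} [NormedAddCommGroup E] [InnerProductSpace ℝ E] [CompleteSpace E]
    (P Pinv : E →L[ℝ] E)
    (hP_selfadj : ∀ u v : E, ⟪P u, v⟫_ℝ = ⟪u, P v⟫_ℝ)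
    (hP_posdef : ∃ c > (0:ℝ), ∀ u : E, c * ‖u‖ ^ 2 ≤ ⟪u, P u⟫_ℝ)
    (hIP_posdef : ∃ c > (0:ℝ), ∀ u : E, c * ‖u‖ ^ 2 ≤ ⟪u, u - P u⟫_ℝ)
    (hPinv : ∀ u : E, Pinv (P u) = u) (hPinv' : ∀ u : E, P (Pinv u) = u)
    (R T : E → E)
    (hR_ne : ∀ x y : E, ‖R x - R y‖ ≤ ‖x - y‖)
    (hT : ∀ x : E, T x = x - P x + P (R x)) :
    ∀ x y : E, Real.sqrt ⟪T x - T y, Pinv (T x - T y)⟫_ℝ ≤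
      Real.sqrt ⟪x - y, Pinv (x - y)⟫_ℝ := by
  intro x y
  obtain ⟨c, hc, hIP⟩ := hIP_posdef
  set u : E := x - y with hu
  set q : E := R x - R y - u with hq
  have hTd : T x - T y = u + P q := by
    simp only [hT, hq, hu, map_sub]
    abel
  have hPinvq : Pinv (u + P q) = Pinv u + q := by rw [map_add, hPinv]
  have hPq : ⟪P q, Pinv u⟫_ℝ = ⟪u, q⟫_ℝ := by
    rw [hP_selfadj, hPinv', real_inner_comm]
  have key : ⟪T x - T y, Pinv (T x - T y)⟫_ℝ
      = ⟪u, Pinv u⟫_ℝ + 2 * ⟪u, q⟫_ℝ + ⟪q, P q⟫_ℝ := by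
    rw [hTd, hPinvq, inner_add_left, inner_add_right, inner_add_right, hPq,
      real_inner_comm (P q) q]
    ring
  -- nonexpansiveness: 2⟪u,q⟫ + ‖q‖² ≤ 0
  have huq : u + q = R x - R y := by rw [hq]; abel
  have hne : ‖u‖ ^ 2 + 2 * ⟪u, q⟫_ℝ + ‖q‖ ^ 2 ≤ ‖u‖ ^ 2 := by
    have h1 : ‖u + q‖ ≤ ‖u‖ := by rw [huq, hu]; exact hR_ne x y
    have h2 : ‖u + q‖ ^ 2 ≤ ‖u‖ ^ 2 := by
      exact pow_le_pow_left₀ (norm_nonneg _) h1 2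
    rwa [norm_add_sq_real] at h2
  have h2uq : 2 * ⟪u, q⟫_ℝ ≤ -‖q‖ ^ 2 := by linarith
  -- ⟪q, P q⟫ ≤ ‖q‖²
  have hqPq : ⟪q, P q⟫_ℝ ≤ ‖q‖ ^ 2 := by
    have := hIP q
    have h0 : (0:ℝ) ≤ c * ‖q‖ ^ 2 := by positivity
    rw [inner_sub_right, real_inner_self_eq_norm_sq] at this
    linarith
  have hfinal : ⟪T x - T y, Pinv (T x - T y)⟫_ℝ ≤ ⟪u, Pinv u⟫_ℝ := by
    rw [key]; linarith
  exact Real.sqrt_le_sqrt hfinal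
end

section
/- Let θ, η ∈ (0,2) and γ > 0 with γ‖K‖² < (2−θ)(2−η), where K : H → G is a nonzero bounded linear operator. Then the block operator Q on H×G defined by Q(v,u) = ((2−θ)/θ² · v + 1/(θη) · K*u, 1/(θη) · Kv + (2−η)/(η²γ) · u) is self-adjoint and positive definite, i.e., there exists c > 0 with ⟨(v,u), Q(v,u)⟩ ≥ c(‖v‖² + ‖u‖²) for all (v,u). -/
open scoped InnerProductSpace
open ContinuousLinearMap

lemma key_scalar (a d e x y s : ℝ) (ha : 0 < a) (hd : 0 < d)
    (hx : 0 ≤ x) (hy : 0 ≤ y) (hs : -(e * x * y) ≤ s) :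
    (a * d - e ^ 2) / (a + d) * (x ^ 2 + y ^ 2) ≤ a * x ^ 2 + 2 * s + d * y ^ 2 := by
  have had : 0 < a + d := by linarith
  rw [div_mul_eq_mul_div, div_le_iff₀ had]
  nlinarith [sq_nonneg (a * x - e * y), sq_nonneg (e * x - d * y),
    mul_nonneg hx hy, mul_pos ha hd]

/-- For `θ, η ∈ (0,2)`, `γ > 0` with `γ‖K‖² < (2−θ)(2−η)` (`K ≠ 0` bounded linear), the
block operator `Q(v,u) = ((2−θ)/θ² v + (1/(θη)) K*u, (1/(θη)) Kv + (2−η)/(η²γ) u)` is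
self-adjoint and positive definite. -/
theorem stmt13 {H G : Type*} [NormedAddCommGroup H] [InnerProductSpace ℝ H] [CompleteSpace H]
    [NormedAddCommGroup G] [InnerProductSpace ℝ G] [CompleteSpace G]
    (K : H →L[ℝ] G) (hK : K ≠ 0)
    (θ η γ : ℝ) (hθ : θ ∈ Set.Ioo (0:ℝ) 2) (hη : η ∈ Set.Ioo (0:ℝ) 2) (hγ : 0 < γ)
    (hstep : γ * ‖K‖ ^ 2 < (2 - θ) * (2 - η))
    (Q1 : H → G → H) (Q2 : H → G → G)
    (hQ1 : ∀ v u, Q1 v u = ((2 - θ) / θ ^ 2) • v + (1 / (θ * η)) • (adjoint K) u)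
    (hQ2 : ∀ v u, Q2 v u = (1 / (θ * η)) • K v + ((2 - η) / (η ^ 2 * γ)) • u) :
    -- self-adjointness of the block operator Q
    (∀ (v v' : H) (u u' : G),
        ⟪Q1 v u, v'⟫_ℝ + ⟪Q2 v u, u'⟫_ℝ = ⟪v, Q1 v' u'⟫_ℝ + ⟪u, Q2 v' u'⟫_ℝ) ∧
      -- positive definiteness of Q
      ∃ c > (0:ℝ), ∀ (v : H) (u : G),
        c * (‖v‖ ^ 2 + ‖u‖ ^ 2) ≤ ⟪v, Q1 v u⟫_ℝ + ⟪u, Q2 v u⟫_ℝ := by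
  obtain ⟨hθ0, hθ2⟩ := hθ
  obtain ⟨hη0, hη2⟩ := hη
  set a : ℝ := (2 - θ) / θ ^ 2 with ha_def
  set b : ℝ := 1 / (θ * η) with hb_def
  set d : ℝ := (2 - η) / (η ^ 2 * γ) with hd_def
  have ha : 0 < a := div_pos (by linarith) (by positivity)
  have hb : 0 < b := by positivity
  have hd : 0 < d := div_pos (by linarith) (by positivity)
  constructor
  · intro v v' u u'
    simp only [hQ1, hQ2, inner_add_left, inner_add_right, real_inner_smul_left,
      real_inner_smul_right, adjoint_inner_left, adjoint_inner_right]
    ring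
  · refine ⟨(a * d - (b * ‖K‖) ^ 2) / (a + d), ?_, ?_⟩
    · apply div_pos _ (by linarith)
      have : (b * ‖K‖) ^ 2 = ‖K‖ ^ 2 / (θ * η) ^ 2 := by
        rw [hb_def]; ring
      have had : a * d = (2 - θ) * (2 - η) / ((θ * η) ^ 2 * γ) := by
        rw [ha_def, hd_def]; ring
      rw [this, had]
      rw [sub_pos, div_lt_div_iff₀ (by positivity) (by positivity)]
      calc ‖K‖ ^ 2 * ((θ * η) ^ 2 * γ) = γ * ‖K‖ ^ 2 * (θ * η) ^ 2 := by ring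
        _ < (2 - θ) * (2 - η) * (θ * η) ^ 2 := by
            apply mul_lt_mul_of_pos_right hstep (by positivity)
    · intro v u
      have hinner : ⟪v, Q1 v u⟫_ℝ + ⟪u, Q2 v u⟫_ℝ
          = a * ‖v‖ ^ 2 + 2 * (b * ⟪K v, u⟫_ℝ) + d * ‖u‖ ^ 2 := by
        simp only [hQ1, hQ2, inner_add_right, real_inner_smul_right,
          adjoint_inner_right, real_inner_self_eq_norm_sq]
        rw [real_inner_comm u (K v)]
        ring
      rw [hinner]
      apply key_scalar a d (b * ‖K‖) ‖v‖ ‖u‖ _ ha hd (norm_nonneg v) (norm_nonneg u)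
      have h1 : |⟪K v, u⟫_ℝ| ≤ ‖K‖ * ‖v‖ * ‖u‖ := by
        calc |⟪K v, u⟫_ℝ| ≤ ‖K v‖ * ‖u‖ := abs_real_inner_le_norm _ _
          _ ≤ ‖K‖ * ‖v‖ * ‖u‖ :=
            mul_le_mul_of_nonneg_right (K.le_opNorm v) (norm_nonneg u)
      have h2 : -(‖K‖ * ‖v‖ * ‖u‖) ≤ ⟪K v, u⟫_ℝ := by
        have := (abs_le.mp h1).1; linarith
      have := mul_le_mul_of_nonneg_left h2 hb.le
      calc -(b * ‖K‖ * ‖v‖ * ‖u‖) = b * -(‖K‖ * ‖v‖ * ‖u‖) := by ring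
        _ ≤ b * ⟪K v, u⟫_ℝ := this
end

section
/- For the saddle point problem min_x max_y xy on ℝ×ℝ and the linear fixed-point map T_P : ℝ² → ℝ² given by the matrix T_P = [[γ²−3γ+1, 2−γ],[γ²−2γ, 1−γ]], both eigenvalues of T_P are λ = γ²/2 − 2γ + 1 ± (γ/2 − 1)√(γ(γ−4)), and for every γ ∈ (0,4) these (complex) eigenvalues have modulus exactly 1. -/
/-! The eigenvalues are `τ ± w` with `2τ = tr T_P` and `w² = τ² - det T_P`, and `det T_P = 1`.
For `0 < γ < 4` the principal square root of the negative real `γ(γ - 4)` is `i√(γ(4 - γ))`,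
so `λ± = τ ± i y` with `τ, y` real and `|λ±|² = τ² + y² = τ² - w² = det T_P = 1`. -/

open Complex Polynomial

theorem Matrix.isRoot_charpoly_fin_two {R : Type*} [CommRing R] [Nontrivial R]
    (A : Matrix (Fin 2) (Fin 2) R) {τ w : R} (hτ : 2 * τ = A.trace)
    (hw : w ^ 2 = τ ^ 2 - A.det) :
    A.charpoly.IsRoot (τ + w) ∧ A.charpoly.IsRoot (τ - w) := by
  simp only [charpoly_fin_two, IsRoot, eval_add, eval_sub, eval_mul, eval_pow, eval_X, eval_C,
    ← hτ]
  constructor <;> linear_combination hw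

theorem Complex.ofReal_cpow_one_half_of_nonpos {x : ℝ} (hx : x ≤ 0) :
    (x : ℂ) ^ ((1 : ℂ) / 2) = √(-x) * I := by
  rw [ofReal_cpow_of_nonpos hx, ← ofReal_neg, Real.sqrt_eq_rpow,
    ofReal_cpow (neg_nonneg.mpr hx)]
  push_cast
  rw [show (Real.pi : ℂ) * I * (1 / 2) = Real.pi / 2 * I by ring, exp_pi_div_two_mul_I]

/-- For the linear fixed-point map `T_P = [[γ²−3γ+1, 2−γ],[γ²−2γ, 1−γ]]` arising from the
saddle point problem `min_x max_y xy`, both eigenvalues (roots of the characteristic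
polynomial over `ℂ`) are `λ = γ²/2 − 2γ + 1 ± (γ/2 − 1)√(γ(γ−4))`, and for every
`γ ∈ (0,4)` these complex eigenvalues have modulus exactly `1`. -/
theorem stmt15 (γ : ℝ) (hγ : γ ∈ Set.Ioo (0:ℝ) 4)
    (TP : Matrix (Fin 2) (Fin 2) ℂ)
    (hTP : TP = !![((γ:ℂ)^2 - 3*(γ:ℂ) + 1), (2 - (γ:ℂ)); ((γ:ℂ)^2 - 2*(γ:ℂ)), (1 - (γ:ℂ))])
    (lamPlus lamMinus : ℂ)
    (hlp : lamPlus = ((γ:ℂ)^2/2 - 2*(γ:ℂ) + 1) +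
        ((γ:ℂ)/2 - 1) * (((γ:ℂ) * ((γ:ℂ) - 4)) ^ ((1:ℂ)/2)))
    (hlm : lamMinus = ((γ:ℂ)^2/2 - 2*(γ:ℂ) + 1) -
        ((γ:ℂ)/2 - 1) * (((γ:ℂ) * ((γ:ℂ) - 4)) ^ ((1:ℂ)/2))) :
    (TP.charpoly.IsRoot lamPlus ∧ TP.charpoly.IsRoot lamMinus) ∧
      ‖lamPlus‖ = 1 ∧ ‖lamMinus‖ = 1 := by
  obtain ⟨hγ0, hγ4⟩ := hγ
  set τ : ℝ := γ ^ 2 / 2 - 2 * γ + 1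
  set y : ℝ := (γ / 2 - 1) * √(γ * (4 - γ))
  have hy : y ^ 2 = 1 - τ ^ 2 := by
    rw [mul_pow, Real.sq_sqrt (by nlinarith)]
    ring
  have hsqrt : ((γ:ℂ) * ((γ:ℂ) - 4)) ^ ((1:ℂ) / 2) = √(γ * (4 - γ)) * I := by
    rw [show (γ:ℂ) * (γ - 4) = ((γ * (γ - 4) : ℝ) : ℂ) by push_cast; ring,
      ofReal_cpow_one_half_of_nonpos (by nlinarith), neg_mul_eq_mul_neg, neg_sub]
  have hlp' : lamPlus = τ + y * I := by rw [hlp, hsqrt]; simp only [τ, y]; push_cast; ring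
  have hlm' : lamMinus = τ - y * I := by rw [hlm, hsqrt]; simp only [τ, y]; push_cast; ring
  have hnorm (y' : ℝ) (h : y' ^ 2 = y ^ 2) : ‖(τ : ℂ) + y' * I‖ = 1 := by
    rw [norm_add_mul_I, h, hy, add_sub_cancel, Real.sqrt_one]
  have htrace : 2 * (τ : ℂ) = TP.trace := by
    simp only [hTP, Matrix.trace_fin_two_of, τ]; push_cast; ring
  have hdisc : ((y : ℂ) * I) ^ 2 = (τ : ℂ) ^ 2 - TP.det := by
    rw [hTP, Matrix.det_fin_two_of, mul_pow, I_sq, ← ofReal_pow, hy]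
    simp only [τ]; push_cast; ring
  refine ⟨?_, ?_, ?_⟩
  · rw [hlp', hlm']
    exact TP.isRoot_charpoly_fin_two htrace hdisc
  · rw [hlp']; exact hnorm y rfl
  · rw [hlm', sub_eq_add_neg, ← neg_mul, ← ofReal_neg]; exact hnorm (-y) (neg_sq y)
end
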